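/- Let p = (p₀, p₁, p₂) be a probability vector with strictly positive entries and let u₁, u₂ ∈ ℝ. Then there exists an absolutely continuous probability measure μ on ℝ² such that μ(Q₀) = p₀, μ(Q₁) = p₁, μ(Q₂) = p₂, where Q₀ = {(e₁,e₂) : e₁ < −u₁, e₂ < −u₂}, Q₁ = {(e₁,e₂) : e₁ > −u₁, e₁ − e₂ > u₂ − u₁}, Q₂ = {(e₁,e₂) : e₂ > −u₂, e₁ − e₂ < u₂ − u₁}. -/

import Mathlib

/-!
Each choice region is a nonempty open set and the three are pairwise disjoint. Normalising a
locally finite, open-positive measure (here Lebesgue measure) on an open piece of `Qᵢ` of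
finite positive measure gives an absolutely continuous probability measure carried by `Qᵢ`;
the mixture of these with weights `pᵢ` has the prescribed choice probabilities.
-/

open MeasureTheory ProbabilityTheory Set Function
open scoped ENNReal

section

variable {X : Type*} [TopologicalSpace X] [MeasurableSpace X] [OpensMeasurableSpace X]
  (ν : Measure X) [ν.IsOpenPosMeasure] [IsLocallyFiniteMeasure ν]

theorem exists_isProbabilityMeasure_absolutelyContinuous_measure_compl_eq_zero {U : Set X}
    (hU : IsOpen U) (hne : U.Nonempty) :
    ∃ P : Measure X, IsProbabilityMeasure P ∧ P ≪ ν ∧ P Uᶜ = 0 := by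
  obtain ⟨x, hxU⟩ := hne
  obtain ⟨s, hxs, hs, hνs⟩ := ν.exists_isOpen_measure_lt_top x
  have hsU : IsOpen (s ∩ U) := hs.inter hU
  have hpos : ν (s ∩ U) ≠ 0 := (hsU.measure_pos ν ⟨x, hxs, hxU⟩).ne'
  have hfin : ν (s ∩ U) ≠ ∞ := ((measure_mono inter_subset_left).trans_lt hνs).ne
  refine ⟨ν[|s ∩ U], cond_isProbabilityMeasure_of_finite hpos hfin, cond_absolutelyContinuous,
    ?_⟩
  rw [cond_apply hsU.measurableSet, inter_assoc, inter_compl_self, inter_empty, measure_empty,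
    mul_zero]

theorem exists_isProbabilityMeasure_absolutelyContinuous_measure_eq {ι : Type*} [Fintype ι]
    {Q : ι → Set X} (hQ : ∀ i, IsOpen (Q i)) (hne : ∀ i, (Q i).Nonempty)
    (hdisj : Pairwise (Disjoint on Q)) (p : ι → ℝ≥0∞) (hp : ∑ i, p i = 1) :
    ∃ μ : Measure X, IsProbabilityMeasure μ ∧ μ ≪ ν ∧ ∀ i, μ (Q i) = p i := by
  classical
  choose P hP hPν hPQ using fun i ↦
    exists_isProbabilityMeasure_absolutelyContinuous_measure_compl_eq_zero ν (hQ i) (hne i)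
  have hPQ' : ∀ i j, P i (Q j) = if i = j then 1 else 0 := by
    intro i j
    split_ifs with hij
    · subst hij
      exact (prob_compl_eq_zero_iff (hQ i).measurableSet).mp (hPQ i)
    · exact measure_mono_null ((hdisj hij).subset_compl_left) (hPQ i)
  refine ⟨∑ i, p i • P i, ⟨by simp [hp]⟩, fun s hs ↦ ?_, fun j ↦ ?_⟩
  · simp [hPν _ hs]
  · simp [hPQ']

end

def choiceRegion (u₁ u₂ : ℝ) : Fin 3 → Set (ℝ × ℝ) :=
  ![{e | e.1 < -u₁ ∧ e.2 < -u₂}, {e | -u₁ < e.1 ∧ u₂ - u₁ < e.1 - e.2},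
    {e | -u₂ < e.2 ∧ e.1 - e.2 < u₂ - u₁}]

variable (u₁ u₂ : ℝ)

theorem isOpen_choiceRegion (i : Fin 3) : IsOpen (choiceRegion u₁ u₂ i) := by
  fin_cases i <;>
    exact .and (isOpen_lt (by fun_prop) (by fun_prop)) (isOpen_lt (by fun_prop) (by fun_prop))

theorem choiceRegion_nonempty (i : Fin 3) : (choiceRegion u₁ u₂ i).Nonempty := by
  fin_cases i
  · exact ⟨(-u₁ - 1, -u₂ - 1), by simp [choiceRegion]⟩
  · exact ⟨(-u₁ + 1, -u₂ - 1), by simp [choiceRegion]; linarith⟩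
  · exact ⟨(-u₁ - 1, -u₂ + 1), by simp [choiceRegion]; linarith⟩

theorem pairwise_disjoint_choiceRegion : Pairwise (Disjoint on choiceRegion u₁ u₂) := by
  intro i j hij
  rw [onFun, Set.disjoint_left]
  rintro ⟨x, y⟩ hi hj
  fin_cases i <;> fin_cases j <;> simp_all [choiceRegion] <;> linarith

theorem stmt_17 (p₀ p₁ p₂ : ℝ) (h₀ : 0 < p₀) (h₁ : 0 < p₁) (h₂ : 0 < p₂)
    (hsum : p₀ + p₁ + p₂ = 1) (u₁ u₂ : ℝ) :
    ∃ μ : Measure (ℝ × ℝ),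
      IsProbabilityMeasure μ ∧ μ ≪ (volume : Measure (ℝ × ℝ)) ∧
      μ {e : ℝ × ℝ | e.1 < -u₁ ∧ e.2 < -u₂} = ENNReal.ofReal p₀ ∧
      μ {e : ℝ × ℝ | -u₁ < e.1 ∧ u₂ - u₁ < e.1 - e.2} = ENNReal.ofReal p₁ ∧
      μ {e : ℝ × ℝ | -u₂ < e.2 ∧ e.1 - e.2 < u₂ - u₁} = ENNReal.ofReal p₂ := by
  have hp : ∑ i, ![ENNReal.ofReal p₀, ENNReal.ofReal p₁, ENNReal.ofReal p₂] i = 1 := by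
    simp only [Fin.sum_univ_three, Matrix.cons_val]
    rw [← ENNReal.ofReal_add h₀.le h₁.le, ← ENNReal.ofReal_add (by positivity) h₂.le, hsum,
      ENNReal.ofReal_one]
  obtain ⟨μ, hμ, hμν, hμQ⟩ := exists_isProbabilityMeasure_absolutelyContinuous_measure_eq volume
    (isOpen_choiceRegion u₁ u₂) (choiceRegion_nonempty u₁ u₂)
    (pairwise_disjoint_choiceRegion u₁ u₂) _ hp
  exact ⟨μ, hμ, hμν, hμQ 0, hμQ 1, hμQ 2⟩
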